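/- Let G be a group with involution on Z[G] induced by ḡ = g⁻¹, extended linearly. This involution descends to the quotient abelian group Q = Z[G]/⟨g + g⁻¹, 1⟩, and the set of fixed points of the induced involution on Q is exactly the subgroup F₂T generated by the images of the elements of order two of G. -/

import Mathlib

/-- The relation subgroup of the integral group ring `G →₀ ℤ`
generated by the identity element `1` and all elements `g + g⁻¹`. -/
noncomputable def relQ (G : Type*) [Group G] : AddSubgroup (G →₀ ℤ) :=
  AddSubgroup.closure ({Finsupp.single (1 : G) (1 : ℤ)} ∪
    {x | ∃ g : G, x = Finsupp.single g 1 + Finsupp.single g⁻¹ 1})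

/-- The involution of the integral group ring induced by `g ↦ g⁻¹`. -/
noncomputable def conjHom (G : Type*) [Group G] : (G →₀ ℤ) →+ (G →₀ ℤ) :=
  Finsupp.mapDomain.addMonoidHom (fun g : G => g⁻¹)

/-!
Since `g + g⁻¹ ∈ relQ G`, the induced involution on `Q` is negation, so its fixed points
form the `2`-torsion of `Q`. After choosing a linear order on `G`,
`Q ≅ ⊕_{t ∈ T} ℤ/2 ⊕ ⊕_{g < g⁻¹} ℤ`. The free summand is detected by `freePart`, sending
`g` to `g` if `g < g⁻¹`, to `-g⁻¹` if `g⁻¹ < g` and to `0` if `g = g⁻¹`: it vanishes on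
`relQ G`, takes values in a torsion-free group, and `x - freePart x ∈ relQ G + span T`.
So `2x ∈ relQ G` forces `freePart x = 0`, hence `x ∈ relQ G + span T`.
-/

section

open Finsupp

variable {G : Type*} [Group G]

lemma single_one_mem_relQ : single (1 : G) (1 : ℤ) ∈ relQ G :=
  AddSubgroup.subset_closure (Or.inl rfl)

lemma single_add_single_inv_mem_relQ (g : G) : single g 1 + single g⁻¹ 1 ∈ relQ G :=
  AddSubgroup.subset_closure (Or.inr ⟨g, rfl⟩)

@[simp]
lemma conjHom_single (g : G) (n : ℤ) : conjHom G (single g n) = single g⁻¹ n :=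
  mapDomain_single

lemma relQ_le {H : AddSubgroup (G →₀ ℤ)} (h₁ : single 1 1 ∈ H)
    (h₂ : ∀ g : G, single g 1 + single g⁻¹ 1 ∈ H) : relQ G ≤ H :=
  (AddSubgroup.closure_le H).mpr <| by
    rintro _ (rfl | ⟨g, rfl⟩)
    exacts [h₁, h₂ g]

lemma relQ_le_comap_conjHom : relQ G ≤ (relQ G).comap (conjHom G) :=
  relQ_le (by simpa using single_one_mem_relQ)
    fun g ↦ by simpa [add_comm] using single_add_single_inv_mem_relQ g

lemma conjHom_add_self_mem_relQ (x : G →₀ ℤ) : conjHom G x + x ∈ relQ G := by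
  induction x using Finsupp.induction_linear with
  | zero => simp
  | add x y hx hy => simpa [add_add_add_comm] using add_mem hx hy
  | single g n =>
    rw [← smul_single_one, map_zsmul, conjHom_single, ← smul_add]
    simpa [add_comm] using zsmul_mem (single_add_single_inv_mem_relQ g) n

variable (G) in
noncomputable abbrev conjQ : (G →₀ ℤ) ⧸ relQ G →+ (G →₀ ℤ) ⧸ relQ G :=
  QuotientAddGroup.map _ _ (conjHom G) relQ_le_comap_conjHom

lemma conjQ_eq_neg (q : (G →₀ ℤ) ⧸ relQ G) : conjQ G q = -q := by
  induction q using QuotientAddGroup.induction_on with | _ x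
  rw [eq_neg_iff_add_eq_zero]
  exact (QuotientAddGroup.eq_zero_iff _).mpr (conjHom_add_self_mem_relQ x)

variable (G) in
def involutions : Set G := {g | g ^ 2 = 1 ∧ g ≠ 1}

lemma mem_involutions_iff {g : G} : g ∈ involutions G ↔ g⁻¹ = g ∧ g ≠ 1 := by
  rw [← mul_eq_one_iff_inv_eq, ← sq]
  rfl

section LinearOrder

variable [LinearOrder G]

noncomputable def orient (g : G) : G →₀ ℤ :=
  if g < g⁻¹ then single g 1 else if g⁻¹ < g then -single g⁻¹ 1 else 0

lemma orient_inv (g : G) : orient g⁻¹ = -orient g := by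
  rcases lt_trichotomy g g⁻¹ with h | h | h
  · simp [orient, h, h.not_gt]
  · simp [orient, ← h]
  · simp [orient, h, h.not_gt]

lemma orient_of_inv_eq {g : G} (h : g⁻¹ = g) : orient g = 0 := by
  simp [orient, h]

variable (G) in
noncomputable def freePart : (G →₀ ℤ) →+ (G →₀ ℤ) :=
  (linearCombination ℤ orient).toAddMonoidHom

lemma freePart_single (g : G) (n : ℤ) : freePart G (single g n) = n • orient g :=
  linearCombination_single ℤ n g

lemma relQ_le_ker_freePart : relQ G ≤ (freePart G).ker :=
  relQ_le (by simp [freePart_single, orient_of_inv_eq])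
    fun g ↦ by simp [freePart_single, orient_inv]

lemma sub_freePart_mem_sup (x : G →₀ ℤ) :
    x - freePart G x ∈ relQ G ⊔ AddSubgroup.closure ((single · 1) '' involutions G) := by
  induction x using Finsupp.induction_linear with
  | zero => simp
  | add x y hx hy => simpa [add_sub_add_comm] using add_mem hx hy
  | single g n =>
    rw [← smul_single_one, map_zsmul, freePart_single, one_smul, ← smul_sub]
    refine zsmul_mem ?_ n
    rcases lt_trichotomy g g⁻¹ with h | h | h
    · simp [orient, h]
    · rw [orient_of_inv_eq h.symm, sub_zero]
      by_cases hg : g = 1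
      · exact AddSubgroup.mem_sup_left (hg ▸ single_one_mem_relQ)
      · exact AddSubgroup.mem_sup_right <| AddSubgroup.subset_closure
          ⟨g, mem_involutions_iff.mpr ⟨h.symm, hg⟩, rfl⟩
    · rw [orient, if_neg h.not_gt, if_pos h, sub_neg_eq_add]
      exact AddSubgroup.mem_sup_left (single_add_single_inv_mem_relQ g)

end LinearOrder

lemma mem_sup_closure_of_two_nsmul_mem_relQ {x : G →₀ ℤ} (hx : 2 • x ∈ relQ G) :
    x ∈ relQ G ⊔ AddSubgroup.closure ((single · 1) '' involutions G) := by
  let : LinearOrder G := IsWellOrder.linearOrder WellOrderingRel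
  have hfree : freePart G x = 0 := by
    have : 2 • freePart G x = 0 := by rw [← map_nsmul]; exact relQ_le_ker_freePart hx
    simpa using this
  simpa [hfree] using sub_freePart_mem_sup x

lemma two_nsmul_eq_zero_iff_mem_closure (q : (G →₀ ℤ) ⧸ relQ G) :
    2 • q = 0 ↔ q ∈ AddSubgroup.closure
      ((fun t ↦ QuotientAddGroup.mk' (relQ G) (single t 1)) '' involutions G) := by
  induction q using QuotientAddGroup.induction_on with | _ x
  constructor
  · intro hx
    obtain ⟨r, hr, s, hs, rfl⟩ := AddSubgroup.mem_sup.mp <|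
      mem_sup_closure_of_two_nsmul_mem_relQ <| (QuotientAddGroup.eq_zero_iff _).mp hx
    have hs' := AddSubgroup.mem_map_of_mem (QuotientAddGroup.mk' (relQ G)) hs
    rw [AddMonoidHom.map_closure, Set.image_image] at hs'
    simpa [(QuotientAddGroup.eq_zero_iff r).mpr hr] using hs'
  · refine fun hx ↦ AddMonoidHom.mem_ker.mp <|
      (AddSubgroup.closure_le (nsmulAddMonoidHom 2).ker).mpr ?_ hx
    rintro _ ⟨t, ht, rfl⟩
    have hsum := single_add_single_inv_mem_relQ t
    rw [(mem_involutions_iff.mp ht).1, ← two_nsmul] at hsum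
    exact (QuotientAddGroup.eq_zero_iff _).mpr hsum

end

theorem stmt1 (G : Type*) [Group G]
    (T : Set G) (hT : T = {g | g ^ 2 = 1 ∧ g ≠ 1})
    (π : (G →₀ ℤ) →+ (G →₀ ℤ) ⧸ relQ G) (hπ : π = QuotientAddGroup.mk' (relQ G)) :
    (∀ x ∈ relQ G, conjHom G x ∈ relQ G) ∧
    ∃ conjQ : ((G →₀ ℤ) ⧸ relQ G) →+ ((G →₀ ℤ) ⧸ relQ G),
      (∀ x : G →₀ ℤ, conjQ (π x) = π (conjHom G x)) ∧
      {q | conjQ q = q} =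
        (AddSubgroup.closure ((fun t : G => π (Finsupp.single t 1)) '' T) :
          Set ((G →₀ ℤ) ⧸ relQ G)) := by
  subst hT hπ
  refine ⟨fun x hx ↦ relQ_le_comap_conjHom hx, conjQ G, fun x ↦ rfl, ?_⟩
  ext q
  rw [Set.mem_ofPred_eq, conjQ_eq_neg, neg_eq_iff_add_eq_zero, ← two_nsmul, SetLike.mem_coe,
    two_nsmul_eq_zero_iff_mem_closure]
  rfl
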